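/- Fix ε > 0 and θ, θ₀ ∈ ℝ. Let Z₁, Z₂, … be i.i.d. random variables taking values in {−1, 1} with P(Z₁ = 1) = p_ε + (1 − 2p_ε)·Φ(θ₀ − θ). Let Z̄_n = (1/n)·∑_{i=1}^n Z_i, and define the estimator θ̃_n = θ₀ − Φ⁻¹(1/2 − (1/2)·(1/t_ε)·Z̄_n) if |Z̄_n| < t_ε, and θ̃_n = θ₀ otherwise. Then θ̃_n converges to θ in probability as n → ∞. -/

import Mathlib

open Real MeasureTheory ProbabilityTheory Filter Finset
open scoped Topology

/-- The standard normal density `φ(u) = (2π)^{-1/2} exp(-u²/2)`. -/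
noncomputable def stdGaussianPDF (u : ℝ) : ℝ :=
  (Real.sqrt (2 * Real.pi))⁻¹ * Real.exp (-u ^ 2 / 2)

/-- The standard normal cumulative distribution function. -/
noncomputable def stdGaussianCDF (x : ℝ) : ℝ :=
  ∫ t in Set.Iic x, stdGaussianPDF t

lemma stdGaussianPDF_pos (u : ℝ) : 0 < stdGaussianPDF u := by
  unfold stdGaussianPDF
  positivity

lemma stdGaussianPDF_eq : stdGaussianPDF = fun u => (Real.sqrt (2 * Real.pi))⁻¹ * Real.exp (-(1/2) * u ^ 2) := by
  funext u; unfold stdGaussianPDF; ring_nf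

lemma stdGaussianPDF_integrable : Integrable stdGaussianPDF := by
  rw [stdGaussianPDF_eq]
  exact (integrable_exp_neg_mul_sq (by norm_num : (0:ℝ) < 1/2)).const_mul _

lemma stdGaussianPDF_integral : ∫ u, stdGaussianPDF u = 1 := by
  rw [stdGaussianPDF_eq]
  rw [integral_const_mul, integral_gaussian]
  have h2 : π / (1/2 : ℝ) = 2 * π := by ring
  rw [h2]
  rw [inv_mul_cancel₀]
  exact (Real.sqrt_pos.2 (by positivity)).ne'

lemma setIntegral_stdGaussianPDF_pos {s : Set ℝ} (hs : MeasurableSet s) (h : 0 < volume s) :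
    0 < ∫ t in s, stdGaussianPDF t := by
  rw [setIntegral_pos_iff_support_of_nonneg_ae]
  · have : Function.support stdGaussianPDF = Set.univ := by
      ext u; simp [(stdGaussianPDF_pos u).ne']
    rwa [this, Set.univ_inter]
  · exact Filter.Eventually.of_forall (fun u => (stdGaussianPDF_pos u).le)
  · exact stdGaussianPDF_integrable.integrableOn

lemma stdGaussianCDF_pos (x : ℝ) : 0 < stdGaussianCDF x :=
  setIntegral_stdGaussianPDF_pos measurableSet_Iic (by simp)

lemma stdGaussianCDF_strictMono : StrictMono stdGaussianCDF := by
  intro x y hxy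
  have hsplit : stdGaussianCDF y = stdGaussianCDF x + ∫ t in Set.Ioc x y, stdGaussianPDF t := by
    unfold stdGaussianCDF
    rw [← setIntegral_union (Set.Iic_disjoint_Ioc le_rfl) measurableSet_Ioc
      stdGaussianPDF_integrable.integrableOn stdGaussianPDF_integrable.integrableOn,
      Set.Iic_union_Ioc_eq_Iic hxy.le]
  have hpos : 0 < ∫ t in Set.Ioc x y, stdGaussianPDF t :=
    setIntegral_stdGaussianPDF_pos measurableSet_Ioc (by simp [hxy])
  linarith

lemma stdGaussianCDF_lt_one (x : ℝ) : stdGaussianCDF x < 1 := by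
  have hcompl := integral_add_compl (measurableSet_Iic : MeasurableSet (Set.Iic x)) stdGaussianPDF_integrable (μ := volume)
  have hpos : 0 < ∫ t in (Set.Iic x)ᶜ, stdGaussianPDF t := by
    rw [Set.compl_Iic]
    exact setIntegral_stdGaussianPDF_pos measurableSet_Ioi (by simp)
  have : stdGaussianCDF x + ∫ t in (Set.Iic x)ᶜ, stdGaussianPDF t = 1 := by
    rw [← stdGaussianPDF_integral]; exact hcompl
  linarith

lemma measurable_comp_of_countable_range {Ω : Type*} [MeasurableSpace Ω] {f : Ω → ℝ}
    (hf : Measurable f) (hc : (Set.range f).Countable) (g : ℝ → ℝ) : Measurable (g ∘ f) := by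
  have : Countable (Set.range f) := hc.to_subtype
  have h1 : Measurable (Set.rangeFactorization f) := hf.subtype_mk
  have h2 : Measurable (fun x : Set.range f => g x) := measurable_of_countable _
  exact h2.comp h1

/-- consistency of the first-stage estimator of the two-stage
locally private procedure: `θ̃_n → θ` in probability. -/
theorem first_stage_estimator_consistent
    {Ω : Type*} [MeasurableSpace Ω] (μ : Measure Ω) [IsProbabilityMeasure μ]
    (ε θ θ₀ pε tε : ℝ) (hε : 0 < ε)
    (hpε : pε = Real.exp ε / (1 + Real.exp ε))
    (htε : tε = (Real.exp ε - 1) / (Real.exp ε + 1))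
    (Φinv : ℝ → ℝ)
    (hΦinv₁ : ∀ p : ℝ, 0 < p → p < 1 → stdGaussianCDF (Φinv p) = p)
    (hΦinv₂ : ∀ u : ℝ, Φinv (stdGaussianCDF u) = u)
    (Z : ℕ → Ω → ℝ) (hZm : ∀ i, Measurable (Z i))
    (hindep : iIndepFun Z μ)
    (hident : ∀ i j, IdentDistrib (Z i) (Z j) μ μ)
    (hval : ∀ i ω, Z i ω = 1 ∨ Z i ω = -1)
    (hP1 : ∀ i, (μ {ω | Z i ω = 1}).toReal
      = pε + (1 - 2 * pε) * stdGaussianCDF (θ₀ - θ))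
    (Zbar : ℕ → Ω → ℝ)
    (hZbar : ∀ n ω, Zbar n ω = (1 / (n : ℝ)) * ∑ i ∈ Finset.range n, Z i ω)
    (θtilde : ℕ → Ω → ℝ)
    (hθtilde : ∀ n ω, θtilde n ω =
      if |Zbar n ω| < tε
      then θ₀ - Φinv (1 / 2 - (1 / 2) * (1 / tε) * Zbar n ω)
      else θ₀) :
    TendstoInMeasure μ θtilde Filter.atTop (fun _ => θ) := by
  -- numeric facts
  have hexp : 1 < Real.exp ε := by linarith [Real.add_one_le_exp ε]
  have hden : (0:ℝ) < Real.exp ε + 1 := by linarith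
  have htεpos : 0 < tε := by rw [htε]; exact div_pos (by linarith) (by linarith)
  set q := stdGaussianCDF (θ₀ - θ) with hqdef
  have hq0 : 0 < q := stdGaussianCDF_pos _
  have hq1 : q < 1 := stdGaussianCDF_lt_one _
  set m := tε * (1 - 2 * q) with hmdef
  have hm_abs : |m| < tε := by
    rw [hmdef, abs_mul, abs_of_pos htεpos]
    have h1 : |1 - 2*q| < 1 := abs_lt.2 ⟨by linarith, by linarith⟩
    calc tε * |1 - 2*q| < tε * 1 := by exact mul_lt_mul_of_pos_left h1 htεpos
      _ = tε := mul_one tε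
  -- expectation of Z 0
  set A := {ω | Z 0 ω = 1} with hAdef
  have hA : MeasurableSet A := hZm 0 (measurableSet_singleton 1)
  have hZ0 : Z 0 = fun ω => 2 * A.indicator (fun _ => (1:ℝ)) ω - 1 := by
    funext ω
    rcases hval 0 ω with h | h
    · have hm : ω ∈ A := h
      rw [Set.indicator_of_mem hm, h]; ring
    · have hm : ω ∉ A := by
        intro hc
        have : Z 0 ω = 1 := hc
        rw [h] at this; norm_num at this
      rw [Set.indicator_of_notMem hm, h]; ring
  have hind_int : Integrable (A.indicator (fun _ => (1:ℝ))) μ :=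
    (integrable_const (1:ℝ)).indicator hA
  have hint : Integrable (Z 0) μ := by
    rw [hZ0]
    exact (hind_int.const_mul 2).sub (integrable_const 1)
  have hEZ : ∫ ω, Z 0 ω ∂μ = m := by
    rw [hZ0, integral_sub (hind_int.const_mul 2) (integrable_const 1),
      integral_const_mul, integral_indicator_const (1:ℝ) hA, integral_const]
    have hμA : (μ A).toReal = pε + (1 - 2 * pε) * q := hP1 0
    rw [Measure.real, Measure.real, hμA]
    simp only [measure_univ, ENNReal.toReal_one, smul_eq_mul, one_mul, mul_one]
    rw [hmdef, hpε, htε]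
    field_simp
    ring
  -- SLLN
  have hpind : Pairwise (Function.onFun (IndepFun · · μ) Z) := fun i j hij => hindep.indepFun hij
  have hslln := strong_law_ae_real Z hint hpind (fun i => hident i 0)
  -- a.e. convergence of θtilde
  have hae : ∀ᵐ ω ∂μ, Tendsto (fun n => θtilde n ω) atTop (𝓝 θ) := by
    filter_upwards [hslln] with ω hω
    rw [hEZ] at hω
    have hZb : Tendsto (fun n => Zbar n ω) atTop (𝓝 m) := by
      refine hω.congr (fun n => ?_)
      rw [hZbar]; ring
    have hlim : (1:ℝ)/2 - (1/2)*(1/tε)*m = q := by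
      rw [hmdef]; field_simp; ring
    have hp : Tendsto (fun n => 1/2 - (1/2)*(1/tε) * Zbar n ω) atTop (𝓝 q) := by
      rw [← hlim]
      exact Tendsto.const_sub _ (hZb.const_mul _)
    have habs : ∀ᶠ n in atTop, |Zbar n ω| < tε :=
      (hZb.abs).eventually (isOpen_Iio.eventually_mem (show |m| ∈ Set.Iio tε from hm_abs))
    have hΦ : Tendsto (fun n => Φinv (1/2 - (1/2)*(1/tε) * Zbar n ω)) atTop (𝓝 (θ₀ - θ)) := by
      rw [Metric.tendsto_atTop]
      intro δ hδ
      set u := θ₀ - θ with hudef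
      have h1 : stdGaussianCDF (u - δ) < q := stdGaussianCDF_strictMono (by linarith)
      have h2 : q < stdGaussianCDF (u + δ) := stdGaussianCDF_strictMono (by linarith)
      have hev : ∀ᶠ n in atTop,
          (1/2 - (1/2)*(1/tε) * Zbar n ω) ∈ Set.Ioo (stdGaussianCDF (u - δ)) (stdGaussianCDF (u + δ)) :=
        hp.eventually (Ioo_mem_nhds h1 h2)
      rcases eventually_atTop.1 hev with ⟨N, hN⟩
      refine ⟨N, fun n hn => ?_⟩
      obtain ⟨hlo, hhi⟩ := hN n hn
      set p := 1/2 - (1/2)*(1/tε) * Zbar n ω with hpdef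
      have hp0 : 0 < p := lt_trans (stdGaussianCDF_pos _) hlo
      have hp1 : p < 1 := lt_trans hhi (stdGaussianCDF_lt_one _)
      have hfix : stdGaussianCDF (Φinv p) = p := hΦinv₁ p hp0 hp1
      have hlow : u - δ < Φinv p := by
        by_contra hc
        push_neg at hc
        have := stdGaussianCDF_strictMono.monotone hc
        rw [hfix] at this
        linarith
      have hhigh : Φinv p < u + δ := by
        by_contra hc
        push_neg at hc
        have := stdGaussianCDF_strictMono.monotone hc
        rw [hfix] at this
        linarith
      rw [Real.dist_eq]
      exact abs_lt.2 ⟨by linarith, by linarith⟩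
    have hfin : Tendsto (fun n => θ₀ - Φinv (1/2 - (1/2)*(1/tε) * Zbar n ω)) atTop (𝓝 θ) := by
      have := Tendsto.const_sub θ₀ hΦ
      simpa using this
    refine hfin.congr' ?_
    filter_upwards [habs] with n hn
    rw [hθtilde, if_pos hn]
  -- measurability of θtilde
  have hZbm : ∀ n, Measurable (Zbar n) := by
    intro n
    have : Zbar n = fun ω => (1/(n:ℝ)) * ∑ i ∈ Finset.range n, Z i ω :=
      funext fun ω => hZbar n ω
    rw [this]
    exact (Finset.measurable_sum _ (fun i _ => hZm i)).const_mul _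
  have hmeas : ∀ n, Measurable (θtilde n) := by
    intro n
    have hcr : (Set.range (Zbar n)).Countable := by
      apply Set.Countable.mono _ (Set.countable_range (fun k : ℤ => (1/(n:ℝ)) * (k:ℝ)))
      rintro x ⟨ω, rfl⟩
      refine ⟨∑ i ∈ Finset.range n, (if Z i ω = 1 then 1 else -1 : ℤ), ?_⟩
      rw [hZbar]
      push_cast
      congr 1
      refine (Finset.sum_congr rfl (fun i _ => ?_))
      rcases hval i ω with h | h <;> norm_num [h]
    have : θtilde n = (fun v => if |v| < tε then θ₀ - Φinv (1/2 - (1/2)*(1/tε) * v) else θ₀) ∘ Zbar n :=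
      funext fun ω => hθtilde n ω
    rw [this]
    exact measurable_comp_of_countable_range (hZbm n) hcr _
  exact tendstoInMeasure_of_tendsto_ae (fun n => (hmeas n).aestronglyMeasurable) hae
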